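/- The term rewriting system R obtained by orienting left-to-right the equations x+e=x, e+x=x, (x+y)+z=x+(y+z), (x+y)·z=y·(x·z), (d·x)·y=x·(y+x), e·x=x, d·e=e is terminating: there is no infinite sequence of rewrites. -/

import Mathlib

/-- Ground terms over constants d, e with binary operations + (add) and · (app). -/
inductive Tm : Type
  | d : Tm
  | e : Tm
  | add : Tm → Tm → Tm
  | app : Tm → Tm → Tm
  deriving DecidableEq

open Tm

/-- Root rewrite steps: instances of the oriented rules. -/
inductive Root : Tm → Tm → Prop
  | addE (x) : Root (add x e) x
  | eAdd (x) : Root (add e x) x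
  | assoc (x y z) : Root (add (add x y) z) (add x (add y z))
  | appAdd (x y z) : Root (app (add x y) z) (app y (app x z))
  | appD (x y) : Root (app (app d x) y) (app x (add y x))
  | appE (x) : Root (app e x) x
  | dE : Root (app d e) e

/-- One rewrite step: a root step applied at some subterm position. -/
inductive Step : Tm → Tm → Prop
  | root {t u} : Root t u → Step t u
  | addL {t t' u} : Step t t' → Step (add t u) (add t' u)
  | addR {t u u'} : Step u u' → Step (add t u) (add t u')
  | appL {t t' u} : Step t t' → Step (app t u) (app t' u)
  | appR {t u u'} : Step u u' → Step (app t u) (app t u')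

/-- Zero or more rewrite steps. -/
def Steps : Tm → Tm → Prop := Relation.ReflTransGen Step

/-- A normal form is a term to which no rule applies. -/
def NormalForm (t : Tm) : Prop := ∀ u, ¬ Step t u

/-- Provable equality in the equational theory (reflexive symmetric transitive
congruence closure of the rule instances). -/
def TermEq : Tm → Tm → Prop := Relation.EqvGen Step


/-! The interpretation `[d] = 1`, `[e] = 0`, `[x + y] = 2[x] + [y] + 2`, `[x · y] = 2^[x] ([y] + 1)`
into `ℕ` is strictly monotone in each argument, and every rule strictly decreases it: the factor
`2` on the left summand pays for reassociation, and the exponential in the left factor pays for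
the two rules that move the left factor of an application into its argument. Hence it decreases
along every rewrite step, and an infinite rewrite sequence would descend forever in `ℕ`. -/

def Tm.interp : Tm → ℕ
  | d => 1
  | e => 0
  | add x y => 2 * x.interp + y.interp + 2
  | app x y => 2 ^ x.interp * (y.interp + 1)

theorem Root.interp_lt {t u : Tm} (h : Root t u) : u.interp < t.interp := by
  cases h with
  | addE x | eAdd x | assoc x y z | appE x => simp only [Tm.interp]; omega
  | dE => simp [Tm.interp]
  | appAdd x y z =>
    simp only [Tm.interp, pow_add, pow_mul']
    have hA : 1 ≤ 2 ^ x.interp := Nat.one_le_two_pow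
    have hB : 1 ≤ 2 ^ y.interp := Nat.one_le_two_pow
    have hC : 1 ≤ z.interp + 1 := by omega
    generalize 2 ^ x.interp = A, 2 ^ y.interp = B, z.interp + 1 = C at *
    nlinarith [Nat.mul_le_mul_right (B * C) (show A ≤ A ^ 2 by nlinarith),
      Nat.mul_le_mul_left B (Nat.mul_le_mul hA hC), Nat.mul_le_mul_left (A * B * C) hA]
  | appD x y =>
    simp only [Tm.interp, pow_add, pow_mul', pow_one]
    have hA : 1 ≤ 2 ^ x.interp := Nat.one_le_two_pow
    have ha : x.interp < 2 ^ x.interp := Nat.lt_two_pow_self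
    generalize 2 ^ x.interp = A at *
    nlinarith [Nat.mul_lt_mul_of_pos_left ha hA, Nat.mul_le_mul_right (A * y.interp) hA]

theorem Step.interp_lt {t u : Tm} (h : Step t u) : u.interp < t.interp := by
  induction h with
  | root h => exact h.interp_lt
  | addL _ ih | addR _ ih => simp only [Tm.interp]; omega
  | appL _ ih =>
    simp only [Tm.interp]
    gcongr
    norm_num
  | appR _ ih =>
    simp only [Tm.interp]
    gcongr

theorem R_terminating :
    ¬ ∃ f : ℕ → Tm, ∀ n : ℕ, Step (f n) (f (n + 1)) := by
  rintro ⟨f, hf⟩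
  obtain ⟨n, hn⟩ := WellFounded.not_rel_apply_succ (r := (· < ·)) (Tm.interp ∘ f)
  exact hn (hf n).interp_lt
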